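/- arXiv:2311.07972 — 2 statements merged into one kernel-verified Lean document; each statement's English description precedes it below -/
import Mathlib

section
/- Let $d > 0$, $A > 0$, $M > 0$ and set $\varphi = \min\{A, M\}$. Let $\mu$ be the Gaussian measure $N(0,1)$ on $\mathbb{R}$ and $\nu$ the Gaussian measure $N(0, d^2)$ on $\mathbb{R}$, and let $\mu \otimes \nu$ be their product. Then $(\mu \otimes \nu)\big(\{(e, h) \in \mathbb{R}^2 : |e + h| \le A \text{ and } |h| \le M\}\big) \;\ge\; e^{-AM}\,\frac{d}{d^2 + 1}\left(1 - \exp\!\left(-\frac{d^2+1}{2 d^2}\,\varphi^2\right)\right).$ -/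
/-!
Shearing by `(e, h) ↦ (e + h, h)` preserves Lebesgue measure and maps the selection set onto
the rectangle `|u| ≤ A, |h| ≤ M`, which contains the disc of radius `φ = min A M`. On that
rectangle the joint density at `(u - h, h)` is at least `e^{-AM} / (2πd) · exp (-b (u² + h²))`
with `b = (d² + 1) / (2d²)`, because the cross term `u h` is at least `-AM` and `b ≥ 1/2`.
Integrating this radial minorant over the disc in polar coordinates gives
`e^{-AM} / (2πd) · π / b · (1 - e^{-bφ²})`, which is the claimed bound.
-/

open MeasureTheory ProbabilityTheory Real Set
open scoped NNReal

theorem integral_comp_sq_add_sq (g : ℝ → ℝ) :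
    ∫ p : ℝ × ℝ, g (p.1 ^ 2 + p.2 ^ 2) = 2 * π * ∫ r in Ioi 0, r * g (r ^ 2) := by
  rw [← integral_comp_polarCoord_symm]
  have htarget : polarCoord.target = Ioi (0 : ℝ) ×ˢ Ioo (-π) π := rfl
  -- the factor `1` is the angular integrand, split off by `setIntegral_prod_mul`
  have hpolar : ∀ p ∈ Ioi (0 : ℝ) ×ˢ Ioo (-π) π,
      p.1 • g ((polarCoord.symm p).1 ^ 2 + (polarCoord.symm p).2 ^ 2)
        = p.1 * g (p.1 ^ 2) * 1 := by
    rintro ⟨r, θ⟩ -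
    simp only [polarCoord_symm_apply, smul_eq_mul, mul_one]
    congr 2
    linear_combination r ^ 2 * sin_sq_add_cos_sq θ
  rw [htarget, setIntegral_congr_fun (measurableSet_Ioi.prod measurableSet_Ioo) hpolar,
    Measure.volume_eq_prod, setIntegral_prod_mul (fun r => r * g (r ^ 2)) (fun _ => 1),
    setIntegral_const, Real.volume_real_Ioo, smul_eq_mul, mul_one,
    max_eq_left (by linarith [pi_pos])]
  ring

theorem integral_mul_exp_neg_mul_sq {b : ℝ} (hb : b ≠ 0) (r : ℝ) :
    ∫ x in 0..r, x * exp (-b * x ^ 2) = (1 - exp (-b * r ^ 2)) / (2 * b) := by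
  have hderiv : ∀ x ∈ uIcc 0 r,
      HasDerivAt (fun x => -exp (-b * x ^ 2) / (2 * b)) (x * exp (-b * x ^ 2)) x := by
    intro x _
    have := (((hasDerivAt_pow 2 x).const_mul (-b)).exp.neg).div_const (2 * b)
    refine this.congr_deriv ?_
    field_simp
    ring
  rw [intervalIntegral.integral_eq_sub_of_hasDerivAt hderiv
    (Continuous.intervalIntegrable (by fun_prop) _ _)]
  simp only [neg_mul, ne_eq, OfNat.ofNat_ne_zero, not_false_eq_true, zero_pow, mul_zero, exp_zero]
  ring

theorem integral_exp_neg_mul_sq_disc {b : ℝ} (hb : b ≠ 0) {r : ℝ} (hr : 0 ≤ r) :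
    ∫ p in {p : ℝ × ℝ | p.1 ^ 2 + p.2 ^ 2 ≤ r ^ 2}, exp (-b * (p.1 ^ 2 + p.2 ^ 2))
      = π / b * (1 - exp (-b * r ^ 2)) := by
  have hradial : ∀ s ∈ Ioi (0 : ℝ),
      s * (Iic (r ^ 2)).indicator (fun t => exp (-b * t)) (s ^ 2)
        = (Iic r).indicator (fun s => s * exp (-b * s ^ 2)) s := by
    intro s hs
    simp only [indicator_apply, mem_Iic, sq_le_sq₀ (le_of_lt hs) hr]
    split_ifs <;> simp
  have hdisc : {p : ℝ × ℝ | p.1 ^ 2 + p.2 ^ 2 ≤ r ^ 2}.indicator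
      (fun p => exp (-b * (p.1 ^ 2 + p.2 ^ 2)))
        = fun p => (Iic (r ^ 2)).indicator (fun t => exp (-b * t)) (p.1 ^ 2 + p.2 ^ 2) := rfl
  rw [← integral_indicator (measurableSet_le (by fun_prop) (by fun_prop)), hdisc,
    integral_comp_sq_add_sq, setIntegral_congr_fun measurableSet_Ioi hradial,
    setIntegral_indicator measurableSet_Iic, Ioi_inter_Iic,
    ← intervalIntegral.integral_of_le hr, integral_mul_exp_neg_mul_sq hb]
  field_simp

theorem integrable_exp_neg_mul_sq_add_sq {b : ℝ} (hb : 0 < b) :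
    Integrable fun p : ℝ × ℝ => exp (-b * (p.1 ^ 2 + p.2 ^ 2)) := by
  refine ((integrable_exp_neg_mul_sq hb).mul_prod (integrable_exp_neg_mul_sq hb)).congr
    (.of_forall fun p => ?_)
  simp only [mul_add, exp_add]

theorem abs_le_of_sq_add_sq_le_min_sq {x y A M : ℝ} (hA : 0 ≤ A) (hM : 0 ≤ M)
    (h : x ^ 2 + y ^ 2 ≤ min A M ^ 2) : |x| ≤ A ∧ |y| ≤ M := by
  have hφ : 0 ≤ min A M := le_min hA hM
  exact ⟨(abs_le_of_sq_le_sq (by nlinarith) hφ).trans (min_le_left _ _),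
    (abs_le_of_sq_le_sq (by nlinarith) hφ).trans (min_le_right _ _)⟩

theorem gaussianReal_prod_eq_withDensity {m₁ m₂ : ℝ} {v₁ v₂ : ℝ≥0}
    (h₁ : v₁ ≠ 0) (h₂ : v₂ ≠ 0) :
    (gaussianReal m₁ v₁).prod (gaussianReal m₂ v₂)
      = volume.withDensity fun z => gaussianPDF m₁ v₁ z.1 * gaussianPDF m₂ v₂ z.2 := by
  rw [gaussianReal_of_var_ne_zero _ h₁, gaussianReal_of_var_ne_zero _ h₂,
    prod_withDensity (measurable_gaussianPDF _ _) (measurable_gaussianPDF _ _)]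
  rfl

theorem gaussianPDFReal_mul_gaussianPDFReal_sq {d : ℝ} (hd : 0 < d) (x y : ℝ) :
    gaussianPDFReal 0 1 x * gaussianPDFReal 0 ⟨d ^ 2, sq_nonneg d⟩ y
      = (2 * π * d)⁻¹ * exp (-(x ^ 2 / 2 + y ^ 2 / (2 * d ^ 2))) := by
  have hsqrt : √(2 * π * d ^ 2) = √(2 * π) * d := by
    rw [sqrt_mul (by positivity), sqrt_sq hd.le]
  have hsq : √(2 * π) * √(2 * π) = 2 * π := mul_self_sqrt (by positivity)
  change (√(2 * π * 1))⁻¹ * exp (-(x - 0) ^ 2 / (2 * 1))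
      * ((√(2 * π * d ^ 2))⁻¹ * exp (-(y - 0) ^ 2 / (2 * d ^ 2))) = _
  have hconst : (2 * π * d)⁻¹ = (√(2 * π))⁻¹ * (√(2 * π) * d)⁻¹ := by
    rw [← mul_inv, ← mul_assoc, hsq]
  simp only [hsqrt, hconst, sub_zero, mul_one, neg_add, exp_add, neg_div]
  ring

theorem sq_div_two_add_sq_div_le {d e h A M : ℝ} (hd : d ≠ 0) (he : |e + h| ≤ A)
    (hh : |h| ≤ M) :
    e ^ 2 / 2 + h ^ 2 / (2 * d ^ 2)
      ≤ A * M + (d ^ 2 + 1) / (2 * d ^ 2) * ((e + h) ^ 2 + h ^ 2) := by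
  have hcross : -((e + h) * h) ≤ A * M :=
    calc -((e + h) * h) ≤ |e + h| * |h| := by rw [← abs_mul]; exact neg_le_abs _
      _ ≤ A * M := mul_le_mul he hh (abs_nonneg _) ((abs_nonneg _).trans he)
  have hexpand : A * M + (d ^ 2 + 1) / (2 * d ^ 2) * ((e + h) ^ 2 + h ^ 2)
      - (e ^ 2 / 2 + h ^ 2 / (2 * d ^ 2))
        = A * M + (e + h) * h + (e + h) ^ 2 / (2 * d ^ 2) := by
    field_simp
    ring
  have : 0 ≤ (e + h) ^ 2 / (2 * d ^ 2) := by positivity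
  linarith

theorem ofReal_exp_le_gaussianPDF_mul_gaussianPDF {d e h A M : ℝ} (hd : 0 < d)
    (he : |e + h| ≤ A) (hh : |h| ≤ M) :
    ENNReal.ofReal (exp (-(A * M)) * (2 * π * d)⁻¹
        * exp (-((d ^ 2 + 1) / (2 * d ^ 2)) * ((e + h) ^ 2 + h ^ 2)))
      ≤ gaussianPDF 0 1 e * gaussianPDF 0 ⟨d ^ 2, sq_nonneg d⟩ h := by
  simp only [gaussianPDF]
  rw [← ENNReal.ofReal_mul (gaussianPDFReal_nonneg _ _ _),
    gaussianPDFReal_mul_gaussianPDFReal_sq hd, mul_comm (exp _), mul_assoc, ← exp_add]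
  gcongr
  linarith [sq_div_two_add_sq_div_le hd.ne' he hh]

/-- Proposition 3: when `ε ~ N(0,1)` and `η ~ N(0, d²)` are independent, the
probability of the selection set `{|ε + η| ≤ A, |η| ≤ M}` is at least
`e^{-AM} · d/(d²+1) · (1 - exp(-((d²+1)/(2d²)) φ²))` with `φ = min A M`. -/
theorem gaussian_selection_set_lower_bound
    (d A M : ℝ) (hd : 0 < d) (hA : 0 < A) (hM : 0 < M) :
    ENNReal.ofReal
        (Real.exp (-(A * M)) * (d / (d ^ 2 + 1)) *
          (1 - Real.exp (-((d ^ 2 + 1) / (2 * d ^ 2)) * (min A M) ^ 2))) ≤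
      ((gaussianReal 0 1).prod (gaussianReal 0 ⟨d ^ 2, sq_nonneg d⟩))
        {q : ℝ × ℝ | |q.1 + q.2| ≤ A ∧ |q.2| ≤ M} := by
  have hv : (⟨d ^ 2, sq_nonneg d⟩ : ℝ≥0) ≠ 0 := by simp [hd.ne']
  set b := (d ^ 2 + 1) / (2 * d ^ 2) with hb
  set c := exp (-(A * M)) * (2 * π * d)⁻¹ with hc
  set D := {p : ℝ × ℝ | p.1 ^ 2 + p.2 ^ 2 ≤ min A M ^ 2}
  set S := {q : ℝ × ℝ | |q.1 + q.2| ≤ A ∧ |q.2| ≤ M}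
  calc ENNReal.ofReal (exp (-(A * M)) * (d / (d ^ 2 + 1)) * (1 - exp (-b * min A M ^ 2)))
      = ENNReal.ofReal (∫ p in D, c * exp (-b * (p.1 ^ 2 + p.2 ^ 2))) := by
        rw [integral_const_mul, integral_exp_neg_mul_sq_disc (by positivity) (by positivity),
          hb, hc]
        field_simp
    _ = ∫⁻ p in D, ENNReal.ofReal (c * exp (-b * (p.1 ^ 2 + p.2 ^ 2))) :=
        ofReal_integral_eq_lintegral_ofReal
          ((integrable_exp_neg_mul_sq_add_sq (by positivity)).const_mul c).integrableOn
          (.of_forall fun _ => by positivity)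
    _ = ∫⁻ z in (fun z : ℝ × ℝ => (z.1 + z.2, z.2)) ⁻¹' D,
          ENNReal.ofReal (c * exp (-b * ((z.1 + z.2) ^ 2 + z.2 ^ 2))) :=
        ((measurePreserving_add_prod volume volume).setLIntegral_comp_preimage
          (measurableSet_le (by fun_prop) (by fun_prop)) (by fun_prop)).symm
    _ ≤ ∫⁻ z in S, ENNReal.ofReal (c * exp (-b * ((z.1 + z.2) ^ 2 + z.2 ^ 2))) :=
        lintegral_mono_set fun _ hz => abs_le_of_sq_add_sq_le_min_sq hA.le hM.le hz
    _ ≤ ∫⁻ z in S, gaussianPDF 0 1 z.1 * gaussianPDF 0 ⟨d ^ 2, sq_nonneg d⟩ z.2 :=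
        setLIntegral_mono (by fun_prop) fun z hz =>
          ofReal_exp_le_gaussianPDF_mul_gaussianPDF hd hz.1 hz.2
    _ = _ := by rw [gaussianReal_prod_eq_withDensity one_ne_zero hv, withDensity_apply']
end

section
/- Let $p, n_0, n_1 \ge 1$ and $N = n_0 + n_1$. Let $\beta_0 \in \mathbb{R}^p$ with support $H_0 = \{j : (\beta_0)_j \ne 0\}$ and $s_0 = |H_0|$. Let $X^{(0)} \in \mathbb{R}^{n_0 \times p}$ and $X^{(1)} \in \mathbb{R}^{n_1 \times p}$ with rows $x^{(1)}_i$, let $u^{(0)} \in \mathbb{R}^{n_0}$ and $u^{(1)} \in \mathbb{R}^{n_1}$, and set $Y^{(0)} = X^{(0)}\beta_0 + u^{(0)}$ and $Y^{(1)} = X^{(1)}\beta_0 + u^{(1)}$. Let $I_1 \subseteq \{1,\dots,n_1\}$ with $n_{I_1} = |I_1|$, let $w_i \ge c > 0$ for $i \in I_1$, and let $\lambda > 0$. Suppose $\hat\beta$ minimizes over $\beta \in \mathbb{R}^p$ the penalized weighted least-squares objective $L(\beta) = \frac{1}{2N}\Big(\|Y^{(0)} - X^{(0)}\beta\|_2^2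 + \sum_{i \in I_1} w_i\big(Y^{(1)}_i - \langle x^{(1)}_i, \beta\rangle\big)^2\Big) + \lambda \|\beta\|_1$. Assume: (a) the score bound $\frac{1}{N}\Big\|(X^{(0)})^\top u^{(0)} + \sum_{i \in I_1} w_i\, u^{(1)}_i\, x^{(1)}_i\Big\|_\infty \le \lambda/2$; and (b) the restricted eigenvalue condition: there exist $\phi_1, \phi_2 > 0$ such that for every $v \in \mathbb{R}^p$ with $\|v_{H_0^c}\|_1 \le 3\|v_{H_0}\|_1$ one has $\|X^{(0)} v\|_2^2 \ge n_0 \phi_1^2 \|v\|_2^2$ and $\sum_{i \in I_1} \langle x^{(1)}_i, v\rangle^2 \ge n_{I_1} \phi_2^2 \|v\|_2^2$. Then, with $\tilde\rho = (n_0 + n_{I_1})/N$ and $\phi^2 = \min\{\phi_1^2, c\,\phi_2^2\}$, it holds that $\|\hat\beta - \beta_0\|_2^2 \le \frac{16\,\lambda^2\, s_0}{\tilde\rho^2\,\phi^4}.$ -/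
open Finset

set_option maxHeartbeats 2000000

private lemma oracle_aux (D T Ml s0 S1 : ℝ) (hD : 0 < D) (hT : 0 ≤ T)
    (hs0 : 0 ≤ s0) (hMl : 0 ≤ Ml)
    (hup : D * T ≤ 3 * Ml * S1) (hcs : S1 ^ 2 ≤ s0 * T) :
    D ^ 2 * T ≤ 16 * Ml ^ 2 * s0 := by
  rcases eq_or_lt_of_le hT with h0 | hTpos
  · rw [← h0]
    have h5 : (0:ℝ) ≤ 16 * Ml ^ 2 * s0 := by positivity
    nlinarith [h5]
  · have h1 : (D * T) * (D * T) ≤ (3 * Ml * S1) * (3 * Ml * S1) :=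
      mul_self_le_mul_self (mul_nonneg hD.le hT) hup
    have h2 : 9 * Ml ^ 2 * S1 ^ 2 ≤ 9 * Ml ^ 2 * (s0 * T) := by
      nlinarith [mul_le_mul_of_nonneg_left hcs (by positivity : (0:ℝ) ≤ 9 * Ml ^ 2)]
    have h3 : D ^ 2 * T ^ 2 ≤ 9 * Ml ^ 2 * (s0 * T) := by nlinarith [h1, h2]
    have h4 : D ^ 2 * T ≤ 9 * Ml ^ 2 * s0 := by nlinarith [h3, hTpos]
    nlinarith [h4, mul_nonneg (mul_nonneg (by norm_num : (0:ℝ) ≤ (7:ℝ)) (sq_nonneg Ml)) hs0]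

/-- Deterministic oracle inequality underlying Theorem 1 (oracle RIW-TL, `K = 1`):
under the score bound and the restricted eigenvalue condition, the penalized
weighted least-squares minimizer satisfies
`‖β̂ - β₀‖₂² ≤ 16 λ² s₀ / (ρ̃² φ⁴)`. -/
theorem oracle_riw_tl_rate
    {p n0 n1 : ℕ} (hp : 1 ≤ p) (hn0 : 1 ≤ n0) (hn1 : 1 ≤ n1)
    (β0 : Fin p → ℝ)
    (X0 : Fin n0 → Fin p → ℝ) (x1 : Fin n1 → Fin p → ℝ)
    (u0 : Fin n0 → ℝ) (u1 : Fin n1 → ℝ)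
    (Y0 : Fin n0 → ℝ) (hY0 : ∀ i, Y0 i = (∑ j, X0 i j * β0 j) + u0 i)
    (Y1 : Fin n1 → ℝ) (hY1 : ∀ i, Y1 i = (∑ j, x1 i j * β0 j) + u1 i)
    (I1 : Finset (Fin n1)) (w : Fin n1 → ℝ)
    (c : ℝ) (hc : 0 < c) (hw : ∀ i ∈ I1, c ≤ w i)
    (lam : ℝ) (hlam : 0 < lam)
    (L : (Fin p → ℝ) → ℝ)
    (hL : ∀ β, L β =
      (1 / (2 * ((n0 : ℝ) + n1))) *
          ((∑ i, (Y0 i - ∑ j, X0 i j * β j) ^ 2) +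
            ∑ i ∈ I1, w i * (Y1 i - ∑ j, x1 i j * β j) ^ 2) +
        lam * ∑ j, |β j|)
    (βhat : Fin p → ℝ) (hmin : ∀ β, L βhat ≤ L β)
    (hscore : ∀ j, (1 / ((n0 : ℝ) + n1)) *
        |(∑ i, X0 i j * u0 i) + ∑ i ∈ I1, w i * u1 i * x1 i j| ≤ lam / 2)
    (H0 : Finset (Fin p)) (hH0 : H0 = Finset.univ.filter (fun j => β0 j ≠ 0))
    (φ1 φ2 : ℝ) (hφ1 : 0 < φ1) (hφ2 : 0 < φ2)
    (hRE : ∀ v : Fin p → ℝ,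
      (∑ j ∈ H0ᶜ, |v j|) ≤ 3 * ∑ j ∈ H0, |v j| →
        (n0 : ℝ) * φ1 ^ 2 * (∑ j, (v j) ^ 2) ≤ (∑ i, (∑ j, X0 i j * v j) ^ 2) ∧
        (I1.card : ℝ) * φ2 ^ 2 * (∑ j, (v j) ^ 2) ≤
          ∑ i ∈ I1, (∑ j, x1 i j * v j) ^ 2) :
    ∑ j, (βhat j - β0 j) ^ 2 ≤
      16 * lam ^ 2 * (H0.card : ℝ) /
        ((((n0 : ℝ) + I1.card) / ((n0 : ℝ) + n1)) ^ 2 *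
          (min (φ1 ^ 2) (c * φ2 ^ 2)) ^ 2) := by

  classical
  have hn0R : (1:ℝ) ≤ (n0:ℝ) := by exact_mod_cast hn0
  have hn1R : (0:ℝ) ≤ (n1:ℝ) := by positivity
  have hMpos : (0:ℝ) < (n0:ℝ) + (n1:ℝ) := by linarith
  have hMne : ((n0:ℝ) + (n1:ℝ)) ≠ 0 := ne_of_gt hMpos
  set M : ℝ := (n0:ℝ) + (n1:ℝ) with hMdef
  set v : Fin p → ℝ := fun j => βhat j - β0 j with hv
  set a : Fin n0 → ℝ := fun i => ∑ j, X0 i j * v j with ha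
  set b : Fin n1 → ℝ := fun i => ∑ j, x1 i j * v j with hb
  set Sc : Fin p → ℝ :=
    fun j => (∑ i, X0 i j * u0 i) + ∑ i ∈ I1, w i * u1 i * x1 i j with hSc
  -- residual identities
  have hres0 : ∀ i, Y0 i - ∑ j, X0 i j * βhat j = u0 i - a i := by
    intro i
    have : a i = (∑ j, X0 i j * βhat j) - ∑ j, X0 i j * β0 j := by
      rw [ha]
      simp only [hv]
      rw [← Finset.sum_sub_distrib]
      exact Finset.sum_congr rfl fun j _ => by ring
    rw [hY0 i, this]; ring
  have hres1 : ∀ i, Y1 i - ∑ j, x1 i j * βhat j = u1 i - b i := by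
    intro i
    have : b i = (∑ j, x1 i j * βhat j) - ∑ j, x1 i j * β0 j := by
      rw [hb]
      simp only [hv]
      rw [← Finset.sum_sub_distrib]
      exact Finset.sum_congr rfl fun j _ => by ring
    rw [hY1 i, this]; ring
  have hr0 : ∀ i, Y0 i - ∑ j, X0 i j * β0 j = u0 i := fun i => by rw [hY0 i]; ring
  have hr1 : ∀ i, Y1 i - ∑ j, x1 i j * β0 j = u1 i := fun i => by rw [hY1 i]; ring
  -- expand the squares
  have hsq0 : ∑ i, (Y0 i - ∑ j, X0 i j * βhat j) ^ 2
      = (∑ i, (u0 i) ^ 2) - 2 * (∑ i, u0 i * a i) + ∑ i, (a i) ^ 2 := by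
    have h1 : ∀ i : Fin n0, (Y0 i - ∑ j, X0 i j * βhat j) ^ 2
        = (u0 i) ^ 2 - 2 * (u0 i * a i) + (a i) ^ 2 := by
      intro i; rw [hres0 i]; ring
    simp only [h1]
    rw [Finset.sum_add_distrib, Finset.sum_sub_distrib, ← Finset.mul_sum]
  have hsq1 : ∑ i ∈ I1, w i * (Y1 i - ∑ j, x1 i j * βhat j) ^ 2
      = (∑ i ∈ I1, w i * (u1 i) ^ 2) - 2 * (∑ i ∈ I1, w i * u1 i * b i)
        + ∑ i ∈ I1, w i * (b i) ^ 2 := by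
    have h1 : ∀ i ∈ I1, w i * (Y1 i - ∑ j, x1 i j * βhat j) ^ 2
        = w i * (u1 i) ^ 2 - 2 * (w i * u1 i * b i) + w i * (b i) ^ 2 := by
      intro i _; rw [hres1 i]; ring
    rw [Finset.sum_congr rfl h1, Finset.sum_add_distrib, Finset.sum_sub_distrib,
      ← Finset.mul_sum]
  -- cross term
  have hcross : (∑ i, u0 i * a i) + (∑ i ∈ I1, w i * u1 i * b i) = ∑ j, Sc j * v j := by
    have h1 : ∑ i, u0 i * a i = ∑ j, (∑ i, X0 i j * u0 i) * v j := by
      simp only [ha, Finset.mul_sum]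
      rw [Finset.sum_comm]
      exact Finset.sum_congr rfl fun j _ => by
        rw [Finset.sum_mul]; exact Finset.sum_congr rfl fun i _ => by ring
    have h2 : ∑ i ∈ I1, w i * u1 i * b i
        = ∑ j, (∑ i ∈ I1, w i * u1 i * x1 i j) * v j := by
      simp only [hb, Finset.mul_sum]
      rw [Finset.sum_comm]
      exact Finset.sum_congr rfl fun j _ => by
        rw [Finset.sum_mul]; exact Finset.sum_congr rfl fun i _ => by ring
    rw [h1, h2, ← Finset.sum_add_distrib]
    simp only [hSc]
    exact Finset.sum_congr rfl fun j _ => by ring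
  -- basic inequality
  set Qa : ℝ := ∑ i, (a i) ^ 2 with hQa
  set Qb : ℝ := ∑ i ∈ I1, w i * (b i) ^ 2 with hQb
  have hbasic : Qa + Qb ≤ 2 * (∑ j, Sc j * v j)
      + 2 * M * (lam * ((∑ j, |β0 j|) - ∑ j, |βhat j|)) := by
    have key := hmin β0
    rw [hL βhat, hL β0] at key
    simp only [hr0, hr1] at key
    rw [hsq0, hsq1] at key
    have hc0 : (0:ℝ) < 1 / (2 * M) := by positivity
    have e1 : (1 / (2 * M)) *
        (((∑ i, (u0 i) ^ 2) - 2 * (∑ i, u0 i * a i) + Qa)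
          + ((∑ i ∈ I1, w i * (u1 i) ^ 2) - 2 * (∑ i ∈ I1, w i * u1 i * b i) + Qb))
        - (1 / (2 * M)) * ((∑ i, (u0 i) ^ 2) + ∑ i ∈ I1, w i * (u1 i) ^ 2)
        ≤ lam * ((∑ j, |β0 j|) - ∑ j, |βhat j|) := by
      nlinarith [key]
    have e2 : (1 / (2 * M)) *
        (Qa + Qb - 2 * ((∑ i, u0 i * a i) + (∑ i ∈ I1, w i * u1 i * b i)))
        ≤ lam * ((∑ j, |β0 j|) - ∑ j, |βhat j|) := by
      calc (1 / (2 * M)) *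
          (Qa + Qb - 2 * ((∑ i, u0 i * a i) + (∑ i ∈ I1, w i * u1 i * b i)))
          = (1 / (2 * M)) *
            (((∑ i, (u0 i) ^ 2) - 2 * (∑ i, u0 i * a i) + Qa)
              + ((∑ i ∈ I1, w i * (u1 i) ^ 2) - 2 * (∑ i ∈ I1, w i * u1 i * b i) + Qb))
            - (1 / (2 * M)) * ((∑ i, (u0 i) ^ 2) + ∑ i ∈ I1, w i * (u1 i) ^ 2) := by
            ring
        _ ≤ _ := e1
    have e3 : Qa + Qb - 2 * ((∑ i, u0 i * a i) + (∑ i ∈ I1, w i * u1 i * b i))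
        ≤ 2 * M * (lam * ((∑ j, |β0 j|) - ∑ j, |βhat j|)) := by
      have h2M : (0:ℝ) < 2 * M := by positivity
      have := (div_le_iff₀ h2M).mp (by
        calc (Qa + Qb - 2 * ((∑ i, u0 i * a i) + (∑ i ∈ I1, w i * u1 i * b i))) / (2 * M)
            = (1 / (2 * M)) *
              (Qa + Qb - 2 * ((∑ i, u0 i * a i) + (∑ i ∈ I1, w i * u1 i * b i))) := by
              ring
          _ ≤ lam * ((∑ j, |β0 j|) - ∑ j, |βhat j|) := e2)
      linarith [this]
    rw [hcross] at e3
    linarith [e3]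
  -- score bound
  have hSb : ∀ j, |Sc j| ≤ M * lam / 2 := by
    intro j
    have h := hscore j
    have h' : (1 / M) * |Sc j| ≤ lam / 2 := by
      simpa only [hSc] using h
    have h2 := mul_le_mul_of_nonneg_left h' hMpos.le
    calc |Sc j| = M * ((1 / M) * |Sc j|) := by field_simp
      _ ≤ M * (lam / 2) := h2
      _ = M * lam / 2 := by ring
  have hCT : (∑ j, Sc j * v j) ≤ (M * lam / 2) * ∑ j, |v j| := by
    rw [Finset.mul_sum]
    refine Finset.sum_le_sum fun j _ => ?_
    calc Sc j * v j ≤ |Sc j * v j| := le_abs_self _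
      _ = |Sc j| * |v j| := abs_mul _ _
      _ ≤ (M * lam / 2) * |v j| := by
          exact mul_le_mul_of_nonneg_right (hSb j) (abs_nonneg _)
  -- support decomposition
  have hsplit : ∀ f : Fin p → ℝ, ∑ j, f j = (∑ j ∈ H0, f j) + ∑ j ∈ H0ᶜ, f j :=
    fun f => (Finset.sum_add_sum_compl H0 f).symm
  have hz : ∀ j ∈ H0ᶜ, β0 j = 0 := by
    intro j hj
    rw [Finset.mem_compl, hH0, Finset.mem_filter] at hj
    by_contra h
    exact hj ⟨Finset.mem_univ j, h⟩
  have hpen : (∑ j, |β0 j|) - (∑ j, |βhat j|)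
      ≤ (∑ j ∈ H0, |v j|) - ∑ j ∈ H0ᶜ, |v j| := by
    rw [hsplit (fun j => |β0 j|), hsplit (fun j => |βhat j|)]
    have hA : (∑ j ∈ H0, |β0 j|) - (∑ j ∈ H0, |βhat j|) ≤ ∑ j ∈ H0, |v j| := by
      rw [← Finset.sum_sub_distrib]
      refine Finset.sum_le_sum fun j _ => ?_
      calc |β0 j| - |βhat j| ≤ |β0 j - βhat j| := abs_sub_abs_le_abs_sub _ _
        _ = |v j| := by rw [hv]; simp [abs_sub_comm]
    have hB : (∑ j ∈ H0ᶜ, |β0 j|) = 0 := by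
      refine Finset.sum_eq_zero fun j hj => by rw [hz j hj]; simp
    have hC : (∑ j ∈ H0ᶜ, |βhat j|) = ∑ j ∈ H0ᶜ, |v j| := by
      refine Finset.sum_congr rfl fun j hj => ?_
      rw [hv]; simp [hz j hj]
    linarith [hA, hB, hC]
  -- cone inequality
  set S1 : ℝ := ∑ j ∈ H0, |v j| with hS1
  set S2 : ℝ := ∑ j ∈ H0ᶜ, |v j| with hS2
  have hvsplit : (∑ j, |v j|) = S1 + S2 := hsplit (fun j => |v j|)
  have hcone' : Qa + Qb ≤ 3 * (M * lam) * S1 - (M * lam) * S2 := by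
    set CT : ℝ := ∑ j : Fin p, Sc j * v j with hCTdef
    set P0 : ℝ := ∑ j : Fin p, |β0 j| with hP0def
    set Ph : ℝ := ∑ j : Fin p, |βhat j| with hPhdef
    have h2 := mul_le_mul_of_nonneg_left hpen (by positivity : (0:ℝ) ≤ 2 * M * lam)
    have h3 := hCT
    rw [hvsplit] at h3
    clear_value M v a b Sc Qa Qb S1 S2 CT P0 Ph
    nlinarith [hbasic, h2, h3]
  have hQnn : 0 ≤ Qa + Qb := by
    have h1 : 0 ≤ Qa := Finset.sum_nonneg fun i _ => sq_nonneg _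
    have h2 : 0 ≤ Qb := Finset.sum_nonneg fun i hi =>
      mul_nonneg (le_trans hc.le (hw i hi)) (sq_nonneg _)
    linarith
  have hMl : (0:ℝ) < M * lam := mul_pos hMpos hlam
  have hcone : S2 ≤ 3 * S1 := by
    clear_value M v a b Sc Qa Qb S1 S2
    nlinarith [hcone', hQnn, hMl]
  -- restricted eigenvalue
  obtain ⟨hRE1, hRE2⟩ := hRE v hcone
  set T : ℝ := ∑ j, (v j) ^ 2 with hT
  have hTnn : 0 ≤ T := Finset.sum_nonneg fun j _ => sq_nonneg _
  set φm : ℝ := min (φ1 ^ 2) (c * φ2 ^ 2) with hφm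
  have hφmpos : 0 < φm := lt_min (by positivity) (by positivity)
  have hn0nn : (0:ℝ) ≤ (n0:ℝ) := by positivity
  have hnInn : (0:ℝ) ≤ (I1.card : ℝ) := by positivity
  have hQa' : (n0:ℝ) * φ1 ^ 2 * T ≤ Qa := hRE1
  have hQb' : (I1.card : ℝ) * (c * φ2 ^ 2) * T ≤ Qb := by
    have h1 : c * ((I1.card : ℝ) * φ2 ^ 2 * T) ≤ c * ∑ i ∈ I1, (b i) ^ 2 := by
      refine mul_le_mul_of_nonneg_left ?_ hc.le
      simpa only [hb] using hRE2
    have h2 : (∑ i ∈ I1, c * (b i) ^ 2) ≤ Qb :=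
      Finset.sum_le_sum fun i hi => mul_le_mul_of_nonneg_right (hw i hi) (sq_nonneg _)
    have h3 : c * ∑ i ∈ I1, (b i) ^ 2 = ∑ i ∈ I1, c * (b i) ^ 2 := Finset.mul_sum _ _ _
    set E : ℝ := ∑ i ∈ I1, (b i) ^ 2 with hE
    set F : ℝ := ∑ i ∈ I1, c * (b i) ^ 2 with hF
    clear_value M v a b Sc Qa Qb S1 S2 T E F
    nlinarith [h1, h2, h3]
  have hlow : ((n0:ℝ) + I1.card) * φm * T ≤ Qa + Qb := by
    have h1 : 0 ≤ (n0:ℝ) * (φ1 ^ 2 - φm) * T :=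
      mul_nonneg (mul_nonneg hn0nn (by simp [hφm, min_le_left])) hTnn
    have h2 : 0 ≤ (I1.card : ℝ) * (c * φ2 ^ 2 - φm) * T :=
      mul_nonneg (mul_nonneg hnInn (by simp [hφm, min_le_right])) hTnn
    clear_value M v a b Sc Qa Qb S1 S2 T φm
    nlinarith [hQa', hQb', h1, h2]
  have hS2nn : 0 ≤ S2 := Finset.sum_nonneg fun j _ => abs_nonneg _
  have hS1nn : 0 ≤ S1 := Finset.sum_nonneg fun j _ => abs_nonneg _
  have hup : ((n0:ℝ) + I1.card) * φm * T ≤ 3 * (M * lam) * S1 := by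
    clear_value M v a b Sc Qa Qb S1 S2 T φm
    nlinarith [hlow, hcone', mul_nonneg hMl.le hS2nn]
  -- Cauchy-Schwarz
  have hcs : S1 ^ 2 ≤ (H0.card : ℝ) * T := by
    have h1 : S1 ^ 2 ≤ (H0.card : ℝ) * ∑ j ∈ H0, |v j| ^ 2 := by
      rw [hS1]
      exact_mod_cast sq_sum_le_card_mul_sum_sq (s := H0) (f := fun j => |v j|)
    have h2 : (∑ j ∈ H0, |v j| ^ 2) ≤ T := by
      rw [hT]
      calc ∑ j ∈ H0, |v j| ^ 2 = ∑ j ∈ H0, (v j) ^ 2 :=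
            Finset.sum_congr rfl fun j _ => sq_abs _
        _ ≤ ∑ j, (v j) ^ 2 := Finset.sum_le_sum_of_subset_of_nonneg
            (Finset.subset_univ _) (fun j _ _ => sq_nonneg _)
    have h3 : (0:ℝ) ≤ (H0.card : ℝ) := Nat.cast_nonneg _
    set G : ℝ := ∑ j ∈ H0, |v j| ^ 2 with hG
    clear_value M v a b Sc Qa Qb S1 S2 T φm G
    nlinarith [h1, h2, h3, mul_le_mul_of_nonneg_left h2 h3]
  -- combine
  set D : ℝ := ((n0:ℝ) + I1.card) * φm with hD
  have hDpos : 0 < D := by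
    have : (0:ℝ) < (n0:ℝ) + I1.card := by linarith
    exact mul_pos this hφmpos
  have hfinal : D ^ 2 * T ≤ 16 * (M * lam) ^ 2 * (H0.card : ℝ) := by
    have hup' : D * T ≤ 3 * (M * lam) * S1 := hup
    exact oracle_aux D T (M * lam) (H0.card : ℝ) S1 hDpos hTnn
      (Nat.cast_nonneg _) hMl.le hup' hcs
  -- conclude
  have hden : (0:ℝ) < (((n0:ℝ) + I1.card) / M) ^ 2 * φm ^ 2 := by
    have h1 : (0:ℝ) < ((n0:ℝ) + I1.card) / M := div_pos (by linarith) hMpos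
    positivity
  rw [le_div_iff₀ hden]
  have hrw : T * ((((n0:ℝ) + I1.card) / M) ^ 2 * φm ^ 2) = D ^ 2 * T / M ^ 2 := by
    rw [hD]; field_simp
  rw [hrw, div_le_iff₀ (by positivity : (0:ℝ) < M ^ 2)]
  calc D ^ 2 * T ≤ 16 * (M * lam) ^ 2 * (H0.card : ℝ) := hfinal
    _ = 16 * lam ^ 2 * (H0.card : ℝ) * M ^ 2 := by ring
end
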